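/- Let φ: {0,1}* -> {0,1,#}* be a uniform substitution defined by φ(0) = u # v and φ(1) = u' # v' where u, u', v, v' ∈ {0,1}*, |u| = |u'|, and |v| = |v'|. Let w be an infinite binary word. If an abelian power z_0 z_1 ... z_{e-1} with e ≥ |u#v| occurs in φ(w), then |u#v| divides |z_0|. -/

import Mathlib

/-!
The letter `#` sits at the same offset `|u|` in both images, so the positions of `#` in `φ(w)`
are exactly the integers `≡ |u| (mod N)`, `N = |u#v|`, whatever `w` is. A factor of length `L`
therefore contains `L / N` occurrences of `#` up to an error less than one: `|N·k - L| < N`.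
In an abelian power of exponent `e` and period `m` every block has the same number `c` of `#`s,
so the whole power (of length `e·m`) has `k = e·c` of them and `e·|N·c - m| < N ≤ e`,
which forces `N·c = m`.
-/

/-- Abelian equivalence of words: each letter occurs equally often. -/
def AbEq {A : Type*} [DecidableEq A] (u v : List A) : Prop :=
  ∀ a : A, u.count a = v.count a

/-- `u` occurs as a (contiguous) factor of the infinite word `x`. -/
def OccursIn {A : Type*} (x : ℕ → A) (u : List A) : Prop :=
  ∃ i, u = (List.range u.length).map fun j => x (i + j)

/-- An abelian power of exponent `e` and period `m` occurs in `x`. -/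
def IsAbPow {A : Type*} [DecidableEq A] (x : ℕ → A) (e m : ℕ) : Prop :=
  0 < e ∧ 0 < m ∧ ∃ u : ℕ → List A,
    (∀ i < e, (u i).length = m) ∧
    (∀ i < e, AbEq (u i) (u 0)) ∧
    OccursIn x (((List.range e).map u).flatten)

/-- Embedding of binary words into `{0,1,#}* = (Fin 3)*`, sending `0 ↦ 0`, `1 ↦ 1`. -/
def emb (u : List (Fin 2)) : List (Fin 3) := u.map Fin.castSucc

/-- The uniform substitution `φ(0) = u # v`, `φ(1) = u' # v'` with `# = 2`. -/
def phiLetter (u v u' v' : List (Fin 2)) (a : Fin 2) : List (Fin 3) :=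
  if a = 0 then emb u ++ (2 : Fin 3) :: emb v else emb u' ++ (2 : Fin 3) :: emb v'

/-- `φ(w)`, applying the `N`-uniform substitution `φ` (with `N = |u#v|`)
letterwise to the infinite binary word `w`. -/
def phiWord (u v u' v' : List (Fin 2)) (w : ℕ → Fin 2) (n : ℕ) : Fin 3 :=
  phiLetter u v u' v' (w (n / (u.length + 1 + v.length))) |>.getD
    (n % (u.length + 1 + v.length)) 0

lemma List.sum_map_range_of_forall_eq {M : Type*} [AddMonoid M] {e : ℕ} {f : ℕ → M} {c : M}
    (h : ∀ i < e, f i = c) : ((List.range e).map f).sum = e • c := by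
  rw [List.map_congr_left (g := fun _ => c) (by simpa using h), List.map_const',
    List.sum_replicate, List.length_range]

lemma count_flatten_of_abEq {A : Type*} [DecidableEq A] {e : ℕ} {us : ℕ → List A}
    (h : ∀ i < e, AbEq (us i) (us 0)) (a : A) :
    ((List.range e).map us).flatten.count a = e * (us 0).count a := by
  rw [List.count_flatten, List.map_map]
  exact List.sum_map_range_of_forall_eq fun i hi => h i hi a

lemma List.count_map_range_eq_nat_count {A : Type*} [DecidableEq A] (f : ℕ → A) (a : A) (L : ℕ) :
    ((List.range L).map f).count a = Nat.count (fun j => f j = a) L := by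
  simp only [Nat.count, List.count, List.countP_map, Function.comp_def]
  rfl

lemma Nat.mul_count_modEq_sub_mem_Icc {N : ℕ} (hN : 0 < N) (r n : ℕ) :
    (N : ℤ) * n.count (· ≡ r [MOD N]) - n ∈ Set.Icc (-(r % N : ℕ) : ℤ) (N - 1 - (r % N : ℕ)) := by
  rw [Nat.count_modEq_card n hN]
  have hr := Nat.mod_lt r hN
  have hn := Nat.mod_lt n hN
  have hdiv := Nat.div_add_mod n N
  generalize r % N = ρ at *
  generalize n / N = q at *
  generalize n % N = s at *
  subst hdiv
  split_ifs <;> constructor <;> push_cast <;> simp only [mul_add] <;> omega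

lemma Nat.abs_mul_count_add_modEq_sub_lt {N : ℕ} (hN : 0 < N) (r a L : ℕ) :
    |(N : ℤ) * Nat.count (fun k => a + k ≡ r [MOD N]) L - L| < N := by
  have hsplit := Nat.count_add (· ≡ r [MOD N]) a L
  obtain ⟨hlo, hhi⟩ := Nat.mul_count_modEq_sub_mem_Icc hN r (a + L)
  obtain ⟨hlo', hhi'⟩ := Nat.mul_count_modEq_sub_mem_Icc hN r a
  rw [hsplit] at hlo hhi
  rw [abs_lt]
  push_cast at *
  constructor <;> linarith

lemma Int.eq_of_abs_mul_sub_mul_lt {e a b : ℤ} (h : |e * a - e * b| < e) : a = b := by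
  have he : 0 < e := (abs_nonneg _).trans_lt h
  rw [← mul_sub, abs_mul, abs_of_pos he] at h
  have : |a - b| < 1 := lt_of_mul_lt_mul_left (by simpa using h) he.le
  rwa [Int.abs_lt_one_iff, sub_eq_zero] at this

lemma emb_append_cons_emb_getD_eq_two_iff (s t : List (Fin 2)) {k : ℕ}
    (hk : k < s.length + 1 + t.length) :
    (emb s ++ 2 :: emb t).getD k 0 = 2 ↔ k = s.length := by
  rw [List.getD_eq_getElem _ _ (by simp [emb]; omega)]
  simp only [List.getElem_append, emb, List.getElem_cons, List.length_map, List.getElem_map]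
  rw [show (2 : Fin 3) = Fin.last 2 from rfl]
  split_ifs <;> simp only [Fin.castSucc_ne_last, false_iff, true_iff] <;> omega

lemma phiWord_eq_two_iff {u v u' v' : List (Fin 2)} (hu : u.length = u'.length)
    (hv : v.length = v'.length) (w : ℕ → Fin 2) (n : ℕ) :
    phiWord u v u' v' w n = 2 ↔ n ≡ u.length [MOD u.length + 1 + v.length] := by
  have hlt : n % (u.length + 1 + v.length) < u.length + 1 + v.length := Nat.mod_lt _ (by omega)
  rw [Nat.ModEq, Nat.mod_eq_of_lt (show u.length < u.length + 1 + v.length by omega)]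
  unfold phiWord phiLetter
  split_ifs
  · exact emb_append_cons_emb_getD_eq_two_iff u v hlt
  · rw [hu, hv] at hlt ⊢
    exact emb_append_cons_emb_getD_eq_two_iff u' v' hlt

/-- If `|u| = |u'|` and `|v| = |v'|` and an abelian power of exponent `e ≥ |u#v|`
and period `m` occurs in `φ(w)`, then `|u#v|` divides `m`. -/
theorem period_divisible_of_abelian_power_in_phi
    (u v u' v' : List (Fin 2)) (hu : u.length = u'.length) (hv : v.length = v'.length)
    (w : ℕ → Fin 2) (e m : ℕ) (he : u.length + 1 + v.length ≤ e)
    (h : IsAbPow (phiWord u v u' v' w) e m) :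
    (u.length + 1 + v.length) ∣ m := by
  obtain ⟨-, -, us, hlen, habel, i₀, hocc⟩ := h
  set N := u.length + 1 + v.length
  have hpow_len : ((List.range e).map us).flatten.length = e * m := by
    rw [List.length_flatten, List.map_map]
    exact List.sum_map_range_of_forall_eq hlen
  have hcount : ((List.range e).map us).flatten.count 2
      = Nat.count (fun j => i₀ + j ≡ u.length [MOD N]) (e * m) := by
    rw [hocc, hpow_len, List.count_map_range_eq_nat_count]
    simp only [phiWord_eq_two_iff hu hv]
    rfl
  have hbound := Nat.abs_mul_count_add_modEq_sub_lt (by omega : 0 < N) u.length i₀ (e * m)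
  rw [← hcount, count_flatten_of_abEq habel] at hbound
  refine ⟨(us 0).count 2, ?_⟩
  have key : |(e : ℤ) * m - e * (N * (us 0).count 2)| < e :=
    calc |(e : ℤ) * m - e * (N * (us 0).count 2)|
        = |(N : ℤ) * ↑(e * (us 0).count 2) - ↑(e * m)| := by
          rw [← abs_neg]; push_cast; ring_nf
      _ < N := hbound
      _ ≤ e := by exact_mod_cast he
  exact_mod_cast Int.eq_of_abs_mul_sub_mul_lt key
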